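/- arXiv:1809.02864 — 4 statements merged into one kernel-verified Lean document; each statement's English description precedes it below -/
import Mathlib

section
/- For any nonnegative real numbers a_1, ..., a_n (with a_1 > 0 to avoid division by zero; equivalently interpret terms with zero denominator as zero), the following holds: sqrt(sum_{i=1}^n a_i) <= sum_{i=1}^n a_i / sqrt(sum_{j=1}^i a_j) <= 2 * sqrt(sum_{i=1}^n a_i). -/
open Finset

theorem stmt_0 (n : ℕ) (a : ℕ → ℝ) (ha : ∀ i, 0 ≤ a i)
    (hpos : ∀ i < n, 0 < ∑ j ∈ Finset.range (i + 1), a j) :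
    Real.sqrt (∑ i ∈ Finset.range n, a i) ≤
      ∑ i ∈ Finset.range n, a i / Real.sqrt (∑ j ∈ Finset.range (i + 1), a j) ∧
    ∑ i ∈ Finset.range n, a i / Real.sqrt (∑ j ∈ Finset.range (i + 1), a j) ≤
      2 * Real.sqrt (∑ i ∈ Finset.range n, a i) := by
  set S : ℕ → ℝ := fun i => ∑ j ∈ Finset.range i, a j with hS
  have hSnonneg : ∀ i, 0 ≤ S i := fun i => Finset.sum_nonneg fun j _ => ha j
  have hSmono : Monotone S := by
    intro i j hij
    exact Finset.sum_le_sum_of_subset_of_nonneg (Finset.range_subset_range.mpr hij)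
      (fun k _ _ => ha k)
  rcases Nat.eq_zero_or_pos n with hn | hn
  · subst hn; simp
  have hSn : 0 < S n := by
    have := hpos (n - 1) (by omega)
    simpa [hS, Nat.sub_add_cancel hn] using this
  constructor
  · -- lower bound
    have h1 : ∀ i ∈ Finset.range n, a i / Real.sqrt (S n) ≤ a i / Real.sqrt (S (i + 1)) := by
      intro i hi
      rw [Finset.mem_range] at hi
      have hpi : 0 < S (i + 1) := hpos i hi
      have hden : 0 < Real.sqrt (S (i + 1)) := Real.sqrt_pos.mpr hpi
      gcongr
      · exact ha i
      · exact hSmono hi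
    calc Real.sqrt (S n) = S n / Real.sqrt (S n) := (Real.div_sqrt).symm
      _ = ∑ i ∈ Finset.range n, a i / Real.sqrt (S n) := by
          rw [hS, Finset.sum_div]
      _ ≤ ∑ i ∈ Finset.range n, a i / Real.sqrt (S (i + 1)) :=
          Finset.sum_le_sum h1
  · -- upper bound
    have h2 : ∀ i ∈ Finset.range n,
        a i / Real.sqrt (S (i + 1)) ≤ 2 * (Real.sqrt (S (i + 1)) - Real.sqrt (S i)) := by
      intro i hi
      rw [Finset.mem_range] at hi
      have hpi : 0 < S (i + 1) := hpos i hi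
      set t := Real.sqrt (S (i + 1)) with ht
      set s := Real.sqrt (S i) with hs
      have htpos : 0 < t := Real.sqrt_pos.mpr hpi
      have hsnn : 0 ≤ s := Real.sqrt_nonneg _
      have hst : s ≤ t := Real.sqrt_le_sqrt (hSmono (Nat.le_succ i))
      have hai : a i = t ^ 2 - s ^ 2 := by
        rw [ht, hs, Real.sq_sqrt (hSnonneg _), Real.sq_sqrt (hSnonneg _)]
        simp [hS, Finset.sum_range_succ]
      rw [hai, div_le_iff₀ htpos]
      nlinarith [sq_nonneg (t - s)]
    calc ∑ i ∈ Finset.range n, a i / Real.sqrt (S (i + 1))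
        ≤ ∑ i ∈ Finset.range n, 2 * (Real.sqrt (S (i + 1)) - Real.sqrt (S i)) :=
          Finset.sum_le_sum h2
      _ = 2 * (Real.sqrt (S n) - Real.sqrt (S 0)) := by
          rw [← Finset.mul_sum, Finset.sum_range_sub (fun i => Real.sqrt (S i))]
      _ = 2 * Real.sqrt (S n) := by simp [hS]
end

section
/- For any nonnegative real numbers a_1, ..., a_n: sum_{i=1}^n a_i / (1 + sum_{j=1}^i a_j) <= 1 + log(1 + sum_{i=1}^n a_i). -/
lemma aux_log (x y : ℝ) (hy : 0 < y) (hxy : y ≤ x) :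
    (x - y) / x ≤ Real.log x - Real.log y := by
  have hx : 0 < x := lt_of_lt_of_le hy hxy
  have h := Real.log_le_sub_one_of_pos (show 0 < y / x by positivity)
  have hlog : Real.log (y / x) = Real.log y - Real.log x := Real.log_div (ne_of_gt hy) (ne_of_gt hx)
  rw [hlog] at h
  have : (x - y) / x = 1 - y / x := by field_simp
  linarith

lemma main_ind (a : ℕ → ℝ) (ha : ∀ i, 0 ≤ a i) (n : ℕ) :
    ∑ i ∈ Finset.range n, a i / (1 + ∑ j ∈ Finset.range (i + 1), a j) ≤
      Real.log (1 + ∑ i ∈ Finset.range n, a i) := by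
  induction n with
  | zero => simp
  | succ n ih =>
    rw [Finset.sum_range_succ, Finset.sum_range_succ (f := a)]
    have hS : 0 ≤ ∑ i ∈ Finset.range n, a i := Finset.sum_nonneg fun i _ => ha i
    have hy : (0:ℝ) < 1 + ∑ i ∈ Finset.range n, a i := by linarith
    have hxy : 1 + ∑ i ∈ Finset.range n, a i ≤ 1 + (∑ i ∈ Finset.range n, a i + a n) := by
      linarith [ha n]
    have h := aux_log (1 + (∑ i ∈ Finset.range n, a i + a n)) (1 + ∑ i ∈ Finset.range n, a i) hy hxy
    have heq : (1 + (∑ i ∈ Finset.range n, a i + a n)) - (1 + ∑ i ∈ Finset.range n, a i) = a n := by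
      ring
    rw [heq] at h
    linarith

theorem stmt_1 (n : ℕ) (a : ℕ → ℝ) (ha : ∀ i, 0 ≤ a i) :
    ∑ i ∈ Finset.range n, a i / (1 + ∑ j ∈ Finset.range (i + 1), a j) ≤
      1 + Real.log (1 + ∑ i ∈ Finset.range n, a i) := by
  have := main_ind a ha n
  linarith
end

section
/- Let (alpha_t)_{t>=0} satisfy alpha_0^2 - alpha_0 = 0, alpha_t^2 - alpha_t >= 0 for all t, and (alpha_t^2 - alpha_t) - (alpha_{t-1}^2 - alpha_{t-1}) <= alpha_{t-1}/2 for all t >= 1. Let (delta_t)_{t>=0} be nonnegative reals. Then for any T >= 1: sum_{t=0}^{T-1} (alpha_t^2 - alpha_t)(delta_t - delta_{t+1}) <= (1/2) * sum_{t=0}^{T-1} alpha_t * delta_{t+1}. -/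
lemma stmt_9_aux (α δ : ℕ → ℝ)
    (hδ : ∀ t, 0 ≤ δ t)
    (h0 : α 0 ^ 2 - α 0 = 0)
    (hinc : ∀ t, 1 ≤ t → (α t ^ 2 - α t) - (α (t - 1) ^ 2 - α (t - 1)) ≤ α (t - 1) / 2) :
    ∀ n : ℕ, ∑ t ∈ Finset.range (n + 1), (α t ^ 2 - α t) * (δ t - δ (t + 1))
        + (α n ^ 2 - α n) * δ (n + 1)
      ≤ 1 / 2 * ∑ t ∈ Finset.range n, α t * δ (t + 1) := by
  intro n
  induction n with
  | zero =>
    simp [Finset.sum_range_one]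
    nlinarith [hδ 0, hδ 1]
  | succ n ih =>
    rw [Finset.sum_range_succ (f := fun t => (α t ^ 2 - α t) * (δ t - δ (t + 1))) (n := n + 1),
      Finset.sum_range_succ (f := fun t => α t * δ (t + 1)) (n := n)]
    have h := hinc (n + 1) (by omega)
    simp only [Nat.add_sub_cancel] at h
    have hd := hδ (n + 1)
    nlinarith [mul_le_mul_of_nonneg_right h hd]

theorem stmt_9 (T : ℕ) (hT : 1 ≤ T) (α δ : ℕ → ℝ)
    (hδ : ∀ t, 0 ≤ δ t)
    (h0 : α 0 ^ 2 - α 0 = 0)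
    (hnn : ∀ t, 0 ≤ α t ^ 2 - α t)
    (hinc : ∀ t, 1 ≤ t → (α t ^ 2 - α t) - (α (t - 1) ^ 2 - α (t - 1)) ≤ α (t - 1) / 2) :
    ∑ t ∈ Finset.range T, (α t ^ 2 - α t) * (δ t - δ (t + 1)) ≤
      1 / 2 * ∑ t ∈ Finset.range T, α t * δ (t + 1) := by
  obtain ⟨n, rfl⟩ : ∃ n, T = n + 1 := ⟨T - 1, by omega⟩
  have h := stmt_9_aux α δ hδ h0 hinc n
  rw [Finset.sum_range_succ (f := fun t => α t * δ (t + 1))]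
  have key : 0 ≤ (α n ^ 2 - α n) * δ (n + 1) + 1 / 2 * (α n * δ (n + 1)) := by
    have hd := hδ (n + 1)
    nlinarith [hnn n, sq_nonneg (α n), mul_nonneg (hnn n) hd,
      mul_nonneg (mul_self_nonneg (α n)) hd]
  have : (α n)^2 * δ (n+1) = (α n * α n) * δ (n+1) := by ring
  linarith [h]
end

section
/- Define alpha_t = 1 for 0 <= t <= 2 and alpha_t = (t+1)/4 for t >= 3, and let b_0, ..., b_{T-1} be reals in [0,1]. Then for T >= 2: sum_{t=0}^{T-1} alpha_t * b_t / sqrt(1 + sum_{tau=0}^t alpha_tau^2 * b_tau^2) <= 5 * sqrt(log T) * sqrt(T). -/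
/-!
Writing `S t = 1 + ∑_{τ ≤ t} c_τ²` with `c_t = α_t b_t`, Cauchy–Schwarz bounds the square of the sum
by `T · ∑_t c_t² / S t`, and each term `(S t - S (t-1)) / S t` is at most `log S t - log S (t-1)`,
so the sum telescopes to `log S (T-1)`. Since `0 ≤ c_t ≤ t + 1 ≤ T`, this is at most `log T⁴ ≤ 25 log T`.
-/

noncomputable def alpha (t : ℕ) : ℝ := if t ≤ 2 then 1 else (t + 1) / 4

open Finset Real

lemma sum_div_one_add_partial_sum_le_log {g : ℕ → ℝ} (hg : ∀ t, 0 ≤ g t) (T : ℕ) :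
    ∑ t ∈ range T, g t / (1 + ∑ τ ∈ range (t + 1), g τ) ≤ log (1 + ∑ τ ∈ range T, g τ) := by
  induction T with
  | zero => simp
  | succ n ih =>
    set A := 1 + ∑ τ ∈ range n, g τ
    have hA : 0 < A := by linarith [sum_nonneg fun τ (_ : τ ∈ range n) ↦ hg τ]
    have hB : 1 + ∑ τ ∈ range (n + 1), g τ = A + g n := by rw [sum_range_succ]; ring
    have hstep : g n / (A + g n) ≤ log (A + g n) - log A := by
      have key := one_sub_inv_le_log_of_pos (div_pos (add_pos_of_pos_of_nonneg hA (hg n)) hA)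
      rwa [inv_div, log_div (by linarith [hg n]) hA.ne', one_sub_div (by linarith [hg n]),
        add_sub_cancel_left] at key
    rw [sum_range_succ, hB]
    linarith

lemma sum_div_sqrt_one_add_partial_sum_sq_le (c : ℕ → ℝ) (T : ℕ) :
    ∑ t ∈ range T, c t / √(1 + ∑ τ ∈ range (t + 1), c τ ^ 2) ≤
      √(T * log (1 + ∑ τ ∈ range T, c τ ^ 2)) := by
  refine le_sqrt_of_sq_le ?_
  calc (∑ t ∈ range T, c t / √(1 + ∑ τ ∈ range (t + 1), c τ ^ 2)) ^ 2
      ≤ T * ∑ t ∈ range T, (c t / √(1 + ∑ τ ∈ range (t + 1), c τ ^ 2)) ^ 2 := by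
        simpa using sq_sum_le_card_mul_sum_sq (s := range T)
          (f := fun t ↦ c t / √(1 + ∑ τ ∈ range (t + 1), c τ ^ 2))
    _ = T * ∑ t ∈ range T, c t ^ 2 / (1 + ∑ τ ∈ range (t + 1), c τ ^ 2) := by
        congr 1
        refine sum_congr rfl fun t _ ↦ ?_
        rw [div_pow, sq_sqrt (by positivity)]
    _ ≤ T * log (1 + ∑ τ ∈ range T, c τ ^ 2) := by
        gcongr
        exact sum_div_one_add_partial_sum_le_log (fun t ↦ sq_nonneg (c t)) T

lemma one_add_sum_sq_le_pow_four {c : ℕ → ℝ} {T : ℕ} (hT : 2 ≤ T)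
    (hc : ∀ t < T, c t ^ 2 ≤ (T : ℝ) ^ 2) : 1 + ∑ τ ∈ range T, c τ ^ 2 ≤ (T : ℝ) ^ 4 := by
  have hT' : (2 : ℝ) ≤ T := by exact_mod_cast hT
  have hsum : ∑ τ ∈ range T, c τ ^ 2 ≤ T * (T : ℝ) ^ 2 := by
    simpa using sum_le_sum fun t ht ↦ hc t (mem_range.mp ht)
  nlinarith [pow_le_pow_left₀ (by norm_num) hT' 3]

lemma alpha_nonneg (t : ℕ) : 0 ≤ alpha t := by
  unfold alpha; split <;> positivity

lemma alpha_le_succ (t : ℕ) : alpha t ≤ t + 1 := by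
  unfold alpha; split <;> linarith [(t.cast_nonneg : (0 : ℝ) ≤ t)]

theorem stmt_10 (T : ℕ) (hT : 2 ≤ T) (b : ℕ → ℝ)
    (hb : ∀ t ≤ T - 1, 0 ≤ b t ∧ b t ≤ 1) :
    ∑ t ∈ Finset.range T,
        alpha t * b t / Real.sqrt (1 + ∑ τ ∈ Finset.range (t + 1), alpha τ ^ 2 * b τ ^ 2) ≤
      5 * Real.sqrt (Real.log T) * Real.sqrt T := by
  have hc : ∀ t < T, (alpha t * b t) ^ 2 ≤ (T : ℝ) ^ 2 := by
    intro t ht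
    obtain ⟨hb0, hb1⟩ := hb t (by omega)
    have htT : (t : ℝ) + 1 ≤ T := by exact_mod_cast ht
    have hab : alpha t * b t ≤ T := by nlinarith [alpha_nonneg t, alpha_le_succ t]
    exact pow_le_pow_left₀ (mul_nonneg (alpha_nonneg t) hb0) hab 2
  have hlog : log (1 + ∑ τ ∈ range T, (alpha τ * b τ) ^ 2) ≤ 5 ^ 2 * log T := by
    calc log (1 + ∑ τ ∈ range T, (alpha τ * b τ) ^ 2)
        ≤ log ((T : ℝ) ^ 4) := log_le_log (by positivity) (one_add_sum_sq_le_pow_four hT hc)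
      _ ≤ 5 ^ 2 * log T := by
        have hlogT : 0 ≤ log T := log_nonneg (by exact_mod_cast (by omega : 1 ≤ T))
        rw [log_pow]; push_cast; linarith
  calc _ ≤ √(T * log (1 + ∑ τ ∈ range T, (alpha τ * b τ) ^ 2)) := by
        simpa only [mul_pow] using sum_div_sqrt_one_add_partial_sum_sq_le (fun t ↦ alpha t * b t) T
    _ ≤ √(T * (5 ^ 2 * log T)) := by gcongr
    _ = 5 * √(log T) * √T := by
        rw [mul_comm, sqrt_mul (by positivity), sqrt_mul (by positivity), sqrt_sq (by norm_num)]
end
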